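/- The skeleton of the hexagonal-prismatic uniform partition Vo(A₂ × ℤ) embeds isometrically into ℤ^4: on the graph with vertex set {x ∈ ℤ^3 : x₁ + x₂ + x₃ ∈ {0,1}} × ℤ, where (x, c) is adjacent to (y, c') iff either c = c' and |x₁−y₁| + |x₂−y₂| + |x₃−y₃| = 1, or x = y and |c − c'| = 1, the graph distance d satisfies d((x,c), (y,c')) = |x₁−y₁| + |x₂−y₂| + |x₃−y₃| + |c−c'| for all pairs of vertices. -/

import Mathlib

/-- The hexagonal-prismatic graph (skeleton of the uniform partition `Vo(A₂ × ℤ)` of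
3-space by hexagonal prisms): the Cartesian product of the hexagonal (honeycomb)
lattice graph with the two-way infinite path on `ℤ`. Vertices are pairs `(x, c)` with
`x ∈ ℤ^3`, `x₁ + x₂ + x₃ ∈ {0,1}` and `c ∈ ℤ`; `(x,c)` is adjacent to `(y,c')` iff
either `c = c'` and the ℓ1 distance of `x, y` is 1, or `x = y` and `|c − c'| = 1`. -/
def hexPrismaticGraph :
    SimpleGraph ({x : Fin 3 → ℤ // x 0 + x 1 + x 2 = 0 ∨ x 0 + x 1 + x 2 = 1} × ℤ) :=
  SimpleGraph.fromRel (fun p q =>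
    (p.2 = q.2 ∧ ∑ i, |p.1.val i - q.1.val i| = 1) ∨
    (p.1 = q.1 ∧ |p.2 - q.2| = 1))

namespace HexAux

abbrev HexV := {x : Fin 3 → ℤ // x 0 + x 1 + x 2 = 0 ∨ x 0 + x 1 + x 2 = 1}

abbrev V := HexV × ℤ

/-- The ℓ1 distance. -/
def D (p q : V) : ℤ := (∑ i, |p.1.val i - q.1.val i|) + |p.2 - q.2|

lemma D_nonneg (p q : V) : 0 ≤ D p q :=
  add_nonneg (Finset.sum_nonneg fun _ _ => abs_nonneg _) (abs_nonneg _)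

lemma D_self (p : V) : D p p = 0 := by simp [D]

lemma D_eq_zero {p q : V} (h : D p q = 0) : p = q := by
  unfold D at h
  have hs : (0:ℤ) ≤ ∑ i, |p.1.val i - q.1.val i| :=
    Finset.sum_nonneg fun _ _ => abs_nonneg _
  have ha : (0:ℤ) ≤ |p.2 - q.2| := abs_nonneg _
  have h1 : (∑ i, |p.1.val i - q.1.val i|) = 0 := by linarith
  have h2 : |p.2 - q.2| = 0 := by linarith
  have hall := (Finset.sum_eq_zero_iff_of_nonneg (fun i _ => abs_nonneg _)).mp h1
  have hx : p.1 = q.1 := by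
    apply Subtype.ext; funext i
    have := abs_eq_zero.mp (hall i (Finset.mem_univ i))
    linarith
  have hc : p.2 = q.2 := by
    have := abs_eq_zero.mp h2; linarith
  exact Prod.ext hx hc

lemma D_triangle (p r q : V) : D p q ≤ D p r + D r q := by
  unfold D
  have h1 : (∑ i, |p.1.val i - q.1.val i|) ≤
      (∑ i, |p.1.val i - r.1.val i|) + ∑ i, |r.1.val i - q.1.val i| := by
    rw [← Finset.sum_add_distrib]
    exact Finset.sum_le_sum fun i _ => abs_sub_le _ _ _
  have h2 : |p.2 - q.2| ≤ |p.2 - r.2| + |r.2 - q.2| := abs_sub_le _ _ _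
  linarith

lemma adj_D {p q : V} (h : hexPrismaticGraph.Adj p q) : D p q = 1 := by
  rw [hexPrismaticGraph, SimpleGraph.fromRel_adj] at h
  obtain ⟨-, h | h⟩ := h <;> obtain ⟨h1, h2⟩ | ⟨h1, h2⟩ := h
  · rw [D, h2, h1, sub_self, abs_zero]; norm_num
  · have hs : (∑ i, |p.1.val i - q.1.val i|) = 0 := by rw [h1]; simp
    rw [D, hs, h2]; norm_num
  · have hs : (∑ i, |p.1.val i - q.1.val i|) = 1 := by
      rw [show (∑ i, |p.1.val i - q.1.val i|) = ∑ i, |q.1.val i - p.1.val i| from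
        Finset.sum_congr rfl fun i _ => abs_sub_comm _ _]
      exact h2
    have hc : |p.2 - q.2| = 0 := by rw [h1]; simp
    rw [D, hs, hc]; norm_num
  · have hs : (∑ i, |p.1.val i - q.1.val i|) = 0 := by
      rw [show p.1 = q.1 from h1.symm]; simp
    have hc : |p.2 - q.2| = 1 := by rw [abs_sub_comm]; exact h2
    rw [D, hs, hc]; norm_num

lemma length_ge {p q : V} (w : hexPrismaticGraph.Walk p q) : D p q ≤ w.length := by
  induction w with
  | nil => simp [D]
  | @cons u v r h w ih =>
    have h1 := adj_D h
    have h2 := D_triangle u v r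
    simp only [SimpleGraph.Walk.length_cons]
    push_cast
    linarith

lemma exists_lt {x y : Fin 3 → ℤ}
    (h : (∑ i, x i) < (∑ i, y i) ∨ ((∑ i, x i) = (∑ i, y i) ∧ x ≠ y)) :
    ∃ i, x i < y i := by
  by_contra hc
  push_neg at hc
  have hle : (∑ i, y i) ≤ ∑ i, x i := Finset.sum_le_sum fun i _ => hc i
  rcases h with h | ⟨h1, h2⟩
  · linarith
  · apply h2
    funext i
    have key : (∑ i, (x i - y i)) = 0 := by
      rw [Finset.sum_sub_distrib]; omega
    have := (Finset.sum_eq_zero_iff_of_nonneg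
      (fun i _ => by have := hc i; omega : ∀ i ∈ Finset.univ, 0 ≤ x i - y i)).mp key
      i (Finset.mem_univ i)
    omega

lemma update_sums (x y : Fin 3 → ℤ) (i : Fin 3) (v : ℤ)
    (h1 : |v - x i| = 1) (h2 : |v - y i| = |x i - y i| - 1) :
    (∑ k, |Function.update x i v k - x k|) = 1 ∧
    (∑ k, |Function.update x i v k - y k|) = (∑ k, |x k - y k|) - 1 ∧
    (∑ k, Function.update x i v k) = (∑ k, x k) + (v - x i) := by
  have split : ∀ (z : Fin 3 → ℤ),
      (∑ k, |Function.update x i v k - z k|) =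
        |v - z i| + ∑ k ∈ Finset.univ.erase i, |x k - z k| := by
    intro z
    rw [← Finset.add_sum_erase _ _ (Finset.mem_univ i)]
    rw [Function.update_self]
    congr 1
    apply Finset.sum_congr rfl
    intro k hk
    rw [Function.update_of_ne (Finset.ne_of_mem_erase hk)]
  have splitx : ∀ (z : Fin 3 → ℤ),
      (∑ k, |x k - z k|) = |x i - z i| + ∑ k ∈ Finset.univ.erase i, |x k - z k| := by
    intro z
    rw [← Finset.add_sum_erase _ _ (Finset.mem_univ i)]
  refine ⟨?_, ?_, ?_⟩
  · rw [split x, h1]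
    have : (∑ k ∈ Finset.univ.erase i, |x k - x k|) = 0 := by
      apply Finset.sum_eq_zero; intro k _; simp
    rw [this]; norm_num
  · rw [split y, splitx y, h2]; ring
  · rw [← Finset.add_sum_erase _ _ (Finset.mem_univ i),
      ← Finset.add_sum_erase _ x (Finset.mem_univ i), Function.update_self]
    have : (∑ k ∈ Finset.univ.erase i, Function.update x i v k) =
        ∑ k ∈ Finset.univ.erase i, x k := by
      apply Finset.sum_congr rfl
      intro k hk
      rw [Function.update_of_ne (Finset.ne_of_mem_erase hk)]
    rw [this]; ring

lemma sum3 (x : Fin 3 → ℤ) : (∑ i, x i) = x 0 + x 1 + x 2 := Fin.sum_univ_three x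

/-- The key honeycomb step: from `x ≠ y` we can move one step towards `y`. -/
lemma hex_step (x y : HexV) (h : x ≠ y) :
    ∃ x' : HexV, (∑ i, |x'.val i - x.val i|) = 1 ∧
      (∑ i, |x'.val i - y.val i|) = (∑ i, |x.val i - y.val i|) - 1 := by
  have hxy : x.val ≠ y.val := fun he => h (Subtype.ext he)
  rcases x.prop with hx | hx
  · -- sum x = 0 : move up
    have hex : ∃ i, x.val i < y.val i := by
      apply exists_lt
      rcases y.prop with hy | hy
      · right
        exact ⟨by rw [sum3, sum3, hx, hy], hxy⟩
      · left
        rw [sum3, sum3, hx, hy]; norm_num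
    obtain ⟨i, hi⟩ := hex
    have h1 : |(x.val i + 1) - x.val i| = 1 := by simp
    have h2 : |(x.val i + 1) - y.val i| = |x.val i - y.val i| - 1 := by
      rw [abs_of_nonpos (by omega), abs_of_neg (by omega)]; ring
    obtain ⟨e1, e2, e3⟩ := update_sums x.val y.val i (x.val i + 1) h1 h2
    exact ⟨⟨Function.update x.val i (x.val i + 1),
      Or.inr (by rw [← sum3, e3, sum3, hx]; ring)⟩, e1, e2⟩
  · -- sum x = 1 : move down
    have hex : ∃ i, y.val i < x.val i := by
      apply exists_lt (x := y.val) (y := x.val)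
      rcases y.prop with hy | hy
      · left
        rw [sum3, sum3, hx, hy]; norm_num
      · right
        exact ⟨by rw [sum3, sum3, hx, hy], fun he => hxy he.symm⟩
    obtain ⟨i, hi⟩ := hex
    have h1 : |(x.val i - 1) - x.val i| = 1 := by
      rw [abs_of_neg (by omega)]; ring
    have h2 : |(x.val i - 1) - y.val i| = |x.val i - y.val i| - 1 := by
      rw [abs_of_nonneg (by omega), abs_of_pos (by omega)]; ring
    obtain ⟨e1, e2, e3⟩ := update_sums x.val y.val i (x.val i - 1) h1 h2
    exact ⟨⟨Function.update x.val i (x.val i - 1),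
      Or.inl (by rw [← sum3, e3, sum3, hx]; ring)⟩, e1, e2⟩

lemma adj_of_rel {p q : V} (hne : p ≠ q)
    (h : (p.2 = q.2 ∧ ∑ i, |p.1.val i - q.1.val i| = 1) ∨
      (p.1 = q.1 ∧ |p.2 - q.2| = 1)) : hexPrismaticGraph.Adj p q := by
  rw [hexPrismaticGraph, SimpleGraph.fromRel_adj]
  exact ⟨hne, Or.inl h⟩

lemma exists_walk : ∀ (n : ℕ) (p q : V), D p q = n →
    ∃ w : hexPrismaticGraph.Walk p q, w.length = n := by
  intro n
  induction n with
  | zero =>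
    intro p q h
    have : p = q := D_eq_zero (by exact_mod_cast h)
    subst this
    exact ⟨SimpleGraph.Walk.nil, rfl⟩
  | succ n ih =>
    intro p q h
    by_cases hc : p.2 = q.2
    · -- must move in the hexagonal part
      have hx : p.1 ≠ q.1 := by
        intro he
        have h0 : D p q = 0 := by rw [Prod.ext he hc]; exact D_self q
        rw [h0] at h
        omega
      obtain ⟨x', e1, e2⟩ := hex_step p.1 q.1 hx
      set p' : V := (x', p.2) with hp'
      have hadj : hexPrismaticGraph.Adj p p' := by
        apply adj_of_rel
        · intro he
          have h1' : p.1 = x' := congrArg Prod.fst he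
          rw [h1'] at e1
          simp at e1
        · left
          refine ⟨rfl, ?_⟩
          calc (∑ i, |p.1.val i - x'.val i|) = ∑ i, |x'.val i - p.1.val i| :=
                Finset.sum_congr rfl fun i _ => abs_sub_comm _ _
            _ = 1 := e1
      have hD' : D p' q = n := by
        show (∑ i, |x'.val i - q.1.val i|) + |p.2 - q.2| = (n : ℤ)
        rw [D] at h
        rw [hc, sub_self, abs_zero, add_zero] at h ⊢
        rw [e2]
        omega
      obtain ⟨w, hw⟩ := ih p' q hD'
      exact ⟨SimpleGraph.Walk.cons hadj w, by simp [hw]⟩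
    · -- move in the ℤ part
      rcases lt_or_gt_of_ne hc with hlt | hgt
      · set p' : V := (p.1, p.2 + 1) with hp'
        have hadj : hexPrismaticGraph.Adj p p' := by
          apply adj_of_rel
          · intro he
            have : p.2 = p.2 + 1 := congrArg Prod.snd he
            omega
          · right
            exact ⟨rfl, by show |p.2 - (p.2 + 1)| = 1; simp⟩
        have hD' : D p' q = n := by
          show (∑ i, |p.1.val i - q.1.val i|) + |p.2 + 1 - q.2| = (n : ℤ)
          rw [D] at h
          have he : |p.2 + 1 - q.2| = |p.2 - q.2| - 1 := by
            rw [abs_of_nonpos (by omega), abs_of_neg (by omega)]; ring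
          rw [he]
          omega
        obtain ⟨w, hw⟩ := ih p' q hD'
        exact ⟨SimpleGraph.Walk.cons hadj w, by simp [hw]⟩
      · set p' : V := (p.1, p.2 - 1) with hp'
        have hadj : hexPrismaticGraph.Adj p p' := by
          apply adj_of_rel
          · intro he
            have : p.2 = p.2 - 1 := congrArg Prod.snd he
            omega
          · right
            refine ⟨rfl, ?_⟩
            show |p.2 - (p.2 - 1)| = 1
            rw [abs_of_pos (by omega : (0:ℤ) < p.2 - (p.2 - 1))]
            ring
        have hD' : D p' q = n := by
          show (∑ i, |p.1.val i - q.1.val i|) + |p.2 - 1 - q.2| = (n : ℤ)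
          rw [D] at h
          have he : |p.2 - 1 - q.2| = |p.2 - q.2| - 1 := by
            rw [abs_of_nonneg (by omega), abs_of_pos (by omega)]; ring
          rw [he]
          omega
        obtain ⟨w, hw⟩ := ih p' q hD'
        exact ⟨SimpleGraph.Walk.cons hadj w, by simp [hw]⟩

end HexAux

/-- The skeleton of `Vo(A₂ × ℤ)` embeds isometrically into `ℤ^4`:
`d((x,c),(y,c')) = Σᵢ |xᵢ − yᵢ| + |c − c'|`. -/
theorem hexPrismaticGraph_isometric
    (p q : {x : Fin 3 → ℤ // x 0 + x 1 + x 2 = 0 ∨ x 0 + x 1 + x 2 = 1} × ℤ) :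
    (hexPrismaticGraph.dist p q : ℤ) =
      (∑ i, |p.1.val i - q.1.val i|) + |p.2 - q.2| := by
  show (hexPrismaticGraph.dist p q : ℤ) = HexAux.D p q
  have hnn := HexAux.D_nonneg p q
  obtain ⟨n, hn⟩ : ∃ n : ℕ, HexAux.D p q = n := ⟨(HexAux.D p q).toNat, by omega⟩
  obtain ⟨w, hw⟩ := HexAux.exists_walk n p q hn
  have hreach : hexPrismaticGraph.Reachable p q := ⟨w⟩
  have hub : hexPrismaticGraph.dist p q ≤ n := hw ▸ SimpleGraph.dist_le w
  obtain ⟨w', hw'⟩ := hreach.exists_walk_length_eq_dist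
  have hlb := HexAux.length_ge w'
  rw [hw'] at hlb
  omega
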